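/- arXiv:1911.08738 — 3 statements merged into one kernel-verified Lean document; each statement's English description precedes it below -/
import Mathlib

section
/- Let A be a symmetric positive definite n×n real matrix, p ≥ 2, u ≥ 0 and v > 0 real numbers, and ξ, η ∈ ℝⁿ. Then ‖ξ‖_A^p − p (u^{p−1}/v^{p−1}) ‖η‖_A^{p−2} (A η · ξ) + (p−1) (u^p/v^p) ‖η‖_A^p ≥ 0. -/
/-! Put `c = u / v`. Cauchy–Schwarz for the inner product `⟪ξ, η⟫ = A η · ξ` induced by `A` bounds
the middle term by `p ‖ξ‖_A (c ‖η‖_A)^{p-1}`, and Young's inequality with exponents `p` and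
`p / (p - 1)` bounds this by `‖ξ‖_A^p + (p - 1) (c ‖η‖_A)^p`. -/

open Matrix

/-- `‖ξ‖_A = (A ξ · ξ)^{1/2}` -/
noncomputable def normA {n : ℕ} (A : Matrix (Fin n) (Fin n) ℝ) (ξ : Fin n → ℝ) : ℝ :=
  Real.sqrt (A *ᵥ ξ ⬝ᵥ ξ)

theorem dotProduct_mulVec_le_normA_mul_normA {n : ℕ} {A : Matrix (Fin n) (Fin n) ℝ}
    (hA : A.PosSemidef) (ξ η : Fin n → ℝ) : A *ᵥ η ⬝ᵥ ξ ≤ normA A ξ * normA A η := by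
  let _ := A.toSeminormedAddCommGroup hA
  let _ := A.toInnerProductSpace hA
  exact real_inner_le_norm ξ η

theorem mul_mul_rpow_sub_one_le {a t p : ℝ} (ha : 0 ≤ a) (ht : 0 ≤ t) (hp : 1 < p) :
    p * (a * t ^ (p - 1)) ≤ a ^ p + (p - 1) * t ^ p := by
  have hpq : p.HolderConjugate p.conjExponent := .conjExponent hp
  have young := Real.young_inequality_of_nonneg ha (Real.rpow_nonneg ht (p - 1)) hpq
  rw [← Real.rpow_mul ht, hpq.sub_one_mul_conj] at young
  calc p * (a * t ^ (p - 1)) ≤ p * (a ^ p / p + t ^ p / p.conjExponent) := by gcongr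
    _ = a ^ p + (p / p.conjExponent) * t ^ p := by field_simp
    _ = a ^ p + (p - 1) * t ^ p := by rw [hpq.div_conj_eq_sub_one]

theorem picone_scalar {a b c X p : ℝ} (ha : 0 ≤ a) (hb : 0 ≤ b) (hc : 0 ≤ c) (hp : 1 < p)
    (hX : X ≤ a * b) :
    0 ≤ a ^ p - p * c ^ (p - 1) * b ^ (p - 2) * X + (p - 1) * c ^ p * b ^ p := by
  have hb_rpow : b ^ (p - 2) * b = b ^ (p - 1) := by
    rw [show p - 1 = (p - 2) + 1 by ring, Real.rpow_add' hb (by linarith), Real.rpow_one]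
  have hmid : p * c ^ (p - 1) * b ^ (p - 2) * X ≤ p * (a * (c * b) ^ (p - 1)) :=
    calc p * c ^ (p - 1) * b ^ (p - 2) * X ≤ p * c ^ (p - 1) * b ^ (p - 2) * (a * b) := by
          gcongr
      _ = p * (a * (c * b) ^ (p - 1)) := by
          rw [Real.mul_rpow hc hb, ← hb_rpow]; ring
  have young := mul_mul_rpow_sub_one_le ha (mul_nonneg hc hb) hp
  simp only [Real.mul_rpow hc hb] at young hmid
  linarith

/-- Pointwise (algebraic) form of Picone's inequality for the operator
associated with a symmetric positive definite matrix `A`. -/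
theorem picone_pointwise {n : ℕ} (A : Matrix (Fin n) (Fin n) ℝ) (hA : A.PosDef)
    (p : ℝ) (hp : 2 ≤ p) (u v : ℝ) (hu : 0 ≤ u) (hv : 0 < v) (ξ η : Fin n → ℝ) :
    0 ≤ normA A ξ ^ p
        - p * (u ^ (p - 1) / v ^ (p - 1)) * normA A η ^ (p - 2) * (A *ᵥ η ⬝ᵥ ξ)
        + (p - 1) * (u ^ p / v ^ p) * normA A η ^ p := by
  rw [← Real.div_rpow hu hv.le, ← Real.div_rpow hu hv.le]
  exact picone_scalar (Real.sqrt_nonneg _) (Real.sqrt_nonneg _) (div_nonneg hu hv.le)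
    (by linarith) (dotProduct_mulVec_le_normA_mul_normA hA.posSemidef ξ η)
end

section
/- Let A be a symmetric positive definite n×n real matrix, p ≥ 2, u ≥ 0, v > 0, and ξ, η ∈ ℝⁿ. If ‖ξ‖_A^p − p (u^{p−1}/v^{p−1}) ‖η‖_A^{p−2} (A η · ξ) + (p−1)(u^p/v^p) ‖η‖_A^p = 0 and u ≠ 0, then A^{1/2} ξ = (u/v) A^{1/2} η, and hence ξ = (u/v) η. -/
open Matrix

/-- The square root of a positive semidefinite matrix (as in the older Mathlib). -/
noncomputable def Matrix.PosSemidef.sqrt {n : ℕ} {A : Matrix (Fin n) (Fin n) ℝ} (hA : A.PosSemidef) :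
    Matrix (Fin n) (Fin n) ℝ :=
  hA.1.eigenvectorUnitary.1 * diagonal ((↑) ∘ (√·) ∘ hA.1.eigenvalues) *
    (star hA.1.eigenvectorUnitary : Matrix (Fin n) (Fin n) ℝ)

/-!
Put `x = A^{1/2} ξ`, `y = A^{1/2} η` and `t = u / v`, so that `‖·‖_A` becomes the Euclidean norm
and the Picone expression reads `‖x‖^p - p t^{p-1} ‖y‖^{p-2} ⟪y, x⟫ + (p-1) t^p ‖y‖^p`.
It splits as `‖x‖^p - p c^{p-1} ‖x‖ + (p-1) c^p` with `c = t ‖y‖`, the gap between `a ↦ a^p`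
and its tangent at `c`, plus `p t^{p-1} ‖y‖^{p-2} (‖y‖ ‖x‖ - ⟪y, x⟫)`, a Cauchy–Schwarz gap.
Both are nonnegative, so both vanish: strict convexity gives `‖x‖ = t ‖y‖`, and the equality case
of Cauchy–Schwarz then forces `x = t y`. Finally `A^{1/2}` is invertible.
-/

section Tangent

variable {p a c : ℝ}

theorem tangent_lt_rpow (hp : 1 < p) (ha : 0 ≤ a) (hc : 0 ≤ c) (hac : a ≠ c) :
    p * c ^ (p - 1) * a < a ^ p + (p - 1) * c ^ p := by
  rcases hc.eq_or_lt with rfl | hc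
  · have ha : 0 < a := ha.lt_of_ne' hac
    rw [Real.zero_rpow (by linarith), Real.zero_rpow (by linarith)]
    simpa using Real.rpow_pos_of_pos ha p
  · have hcp : c ^ p = c ^ (p - 1) * c := by rw [← Real.rpow_add_one hc.ne', sub_add_cancel]
    have hs : a / c - 1 ≠ 0 := sub_ne_zero.2 (by rwa [ne_eq, div_eq_one_iff_eq hc.ne'])
    have bernoulli := one_add_mul_self_lt_rpow_one_add
      (by linarith [div_nonneg ha hc.le] : -1 ≤ a / c - 1) hs hp
    rw [add_sub_cancel, Real.div_rpow ha hc.le, lt_div_iff₀ (by positivity), hcp] at bernoulli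
    have hexpand : (1 + p * (a / c - 1)) * (c ^ (p - 1) * c)
        = c ^ (p - 1) * c + p * c ^ (p - 1) * a - p * (c ^ (p - 1) * c) := by
      field_simp; ring
    rw [hcp]; linarith

theorem tangent_le_rpow (hp : 1 < p) (ha : 0 ≤ a) (hc : 0 ≤ c) :
    p * c ^ (p - 1) * a ≤ a ^ p + (p - 1) * c ^ p := by
  rcases eq_or_ne a c with rfl | hac
  · rw [mul_assoc, ← Real.rpow_add_one' ha (by linarith), sub_add_cancel]; linarith
  · exact (tangent_lt_rpow hp ha hc hac).le

end Tangent

section InnerProductSpace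

variable {E : Type*} [NormedAddCommGroup E] [InnerProductSpace ℝ E] {x y : E} {p t : ℝ}

theorem eq_smul_of_norm_eq_of_inner_eq (hn : ‖x‖ = t * ‖y‖) (hi : inner ℝ y x = ‖y‖ * ‖x‖) :
    x = t • y := by
  have hsq : ‖x - t • y‖ ^ 2 = 0 := by
    rw [norm_sub_sq_real, real_inner_smul_right, real_inner_comm, hi, norm_smul, hn,
      Real.norm_eq_abs, mul_pow |t|, sq_abs]
    ring
  exact sub_eq_zero.1 (norm_eq_zero.1 (pow_eq_zero_iff two_ne_zero |>.1 hsq))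

theorem picone_expr_eq_tangent_gap_add_cauchySchwarz_gap (hp : p ≠ 1) (ht : 0 ≤ t) :
    ‖x‖ ^ p - p * t ^ (p - 1) * ‖y‖ ^ (p - 2) * inner ℝ y x + (p - 1) * t ^ p * ‖y‖ ^ p
      = (‖x‖ ^ p - p * (t * ‖y‖) ^ (p - 1) * ‖x‖ + (p - 1) * (t * ‖y‖) ^ p)
        + p * t ^ (p - 1) * ‖y‖ ^ (p - 2) * (‖y‖ * ‖x‖ - inner ℝ y x) := by
  have hy : ‖y‖ ^ (p - 1) = ‖y‖ ^ (p - 2) * ‖y‖ := by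
    rw [← Real.rpow_add_one' (norm_nonneg y) (by contrapose! hp; linarith)]
    ring_nf
  rw [Real.mul_rpow ht (norm_nonneg y), Real.mul_rpow ht (norm_nonneg y), hy]
  ring

theorem eq_smul_of_picone_expr_eq_zero (hp : 1 < p) (ht : 0 < t)
    (h : ‖x‖ ^ p - p * t ^ (p - 1) * ‖y‖ ^ (p - 2) * inner ℝ y x + (p - 1) * t ^ p * ‖y‖ ^ p = 0) :
    x = t • y := by
  have hty : 0 ≤ t * ‖y‖ := by positivity
  have hcoeff : 0 ≤ p * t ^ (p - 1) * ‖y‖ ^ (p - 2) := by positivity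
  rw [picone_expr_eq_tangent_gap_add_cauchySchwarz_gap hp.ne' ht.le] at h
  have htangent : 0 ≤ ‖x‖ ^ p - p * (t * ‖y‖) ^ (p - 1) * ‖x‖ + (p - 1) * (t * ‖y‖) ^ p := by
    linarith [tangent_le_rpow hp (norm_nonneg x) hty]
  have hcs : 0 ≤ p * t ^ (p - 1) * ‖y‖ ^ (p - 2) * (‖y‖ * ‖x‖ - inner ℝ y x) :=
    mul_nonneg hcoeff (sub_nonneg.2 (real_inner_le_norm y x))
  obtain ⟨htangent0, hcs0⟩ := (add_eq_zero_iff_of_nonneg htangent hcs).1 h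
  have hnorm : ‖x‖ = t * ‖y‖ := by
    by_contra hne
    linarith [tangent_lt_rpow hp (norm_nonneg x) hty hne]
  refine eq_smul_of_norm_eq_of_inner_eq hnorm ?_
  rcases (norm_nonneg y).eq_or_lt with hy | hy
  · rw [← hy, zero_mul, norm_eq_zero.1 hy.symm, inner_zero_left]
  · have hcoeff' : p * t ^ (p - 1) * ‖y‖ ^ (p - 2) ≠ 0 := by positivity
    linarith [(mul_eq_zero.1 hcs0).resolve_left hcoeff']

end InnerProductSpace

namespace Matrix

variable {n : ℕ} {A : Matrix (Fin n) (Fin n) ℝ}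

theorem PosSemidef.transpose_sqrt (hA : A.PosSemidef) : hA.sqrtᵀ = hA.sqrt := by
  rw [← conjTranspose_eq_transpose_of_trivial, PosSemidef.sqrt, conjTranspose_mul,
    conjTranspose_mul, diagonal_conjTranspose]
  simp [star_eq_conjTranspose, mul_assoc]

theorem PosSemidef.sqrt_mul_self (hA : A.PosSemidef) : hA.sqrt * hA.sqrt = A := by
  set U : Matrix (Fin n) (Fin n) ℝ := hA.1.eigenvectorUnitary.1
  set D : Matrix (Fin n) (Fin n) ℝ := diagonal ((↑) ∘ (√·) ∘ hA.1.eigenvalues)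
  have hU : star U * U = 1 := Unitary.coe_star_mul_self _
  have hD : D * D = diagonal (RCLike.ofReal ∘ hA.1.eigenvalues) := by
    rw [diagonal_mul_diagonal]
    congr 1
    funext i
    simp [Real.mul_self_sqrt (hA.eigenvalues_nonneg i)]
  calc hA.sqrt * hA.sqrt = U * D * (star U * U) * D * star U := by
        simp only [PosSemidef.sqrt, U, D, mul_assoc]
    _ = A := by
        rw [hU, mul_one, mul_assoc U D D, hD]
        conv_rhs => rw [hA.1.spectral_theorem, Unitary.conjStarAlgAut_apply]

theorem PosSemidef.inner_toLp_sqrt_mulVec (hA : A.PosSemidef) (w z : Fin n → ℝ) :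
    inner ℝ (WithLp.toLp 2 (hA.sqrt *ᵥ w)) (WithLp.toLp 2 (hA.sqrt *ᵥ z)) = A *ᵥ w ⬝ᵥ z := by
  rw [EuclideanSpace.inner_toLp_toLp, star_trivial]
  conv_rhs => rw [← hA.sqrt_mul_self, ← mulVec_mulVec, dotProduct_comm, dotProduct_mulVec,
    ← mulVec_transpose, hA.transpose_sqrt]

theorem PosSemidef.normA_eq_norm_toLp_sqrt_mulVec (hA : A.PosSemidef) (ξ : Fin n → ℝ) :
    normA A ξ = ‖WithLp.toLp 2 (hA.sqrt *ᵥ ξ)‖ := by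
  rw [normA, norm_eq_sqrt_real_inner, hA.inner_toLp_sqrt_mulVec]

theorem PosDef.injective_sqrt_mulVec (hA : A.PosDef) :
    Function.Injective (hA.posSemidef.sqrt *ᵥ ·) := by
  rw [mulVec_injective_iff_isUnit, isUnit_iff_isUnit_det, ← isUnit_mul_self_iff, ← det_mul,
    hA.posSemidef.sqrt_mul_self, ← isUnit_iff_isUnit_det]
  exact hA.isUnit

end Matrix

/-- Equality case of the pointwise Picone inequality: if the Picone expression
vanishes and `u ≠ 0`, then `A^{1/2} ξ = (u/v) A^{1/2} η`, and hence `ξ = (u/v) η`. -/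
theorem picone_equality_case {n : ℕ} (A : Matrix (Fin n) (Fin n) ℝ) (hA : A.PosDef)
    (p : ℝ) (hp : 2 ≤ p) (u v : ℝ) (hu : 0 ≤ u) (hv : 0 < v) (ξ η : Fin n → ℝ)
    (heq : normA A ξ ^ p
        - p * (u ^ (p - 1) / v ^ (p - 1)) * normA A η ^ (p - 2) * (A *ᵥ η ⬝ᵥ ξ)
        + (p - 1) * (u ^ p / v ^ p) * normA A η ^ p = 0)
    (hu0 : u ≠ 0) :
    hA.posSemidef.sqrt *ᵥ ξ = (u / v) • (hA.posSemidef.sqrt *ᵥ η) ∧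
    ξ = (u / v) • η := by
  have hS := hA.posSemidef
  have ht : 0 < u / v := div_pos (hu.lt_of_ne' hu0) hv
  rw [hS.normA_eq_norm_toLp_sqrt_mulVec, hS.normA_eq_norm_toLp_sqrt_mulVec,
    ← hS.inner_toLp_sqrt_mulVec, ← Real.div_rpow hu hv.le, ← Real.div_rpow hu hv.le] at heq
  have hsqrt : hS.sqrt *ᵥ ξ = (u / v) • (hS.sqrt *ᵥ η) := by
    simpa using congrArg WithLp.ofLp (eq_smul_of_picone_expr_eq_zero (by linarith) ht heq)
  exact ⟨hsqrt, hA.injective_sqrt_mulVec (hsqrt.trans (mulVec_smul _ _ _).symm)⟩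
end

section
/- Let p ≥ 2, α ≥ 1, and μ, C ≥ 0. Then (1/α^p) · ( (2 α^{p+1} μ/(p+1))^{2/p} + C α^{2/p} )^{p/2} ≤ 2αμ/(p+1) + C₁/α^{p−1} + C₂/α, where C₁ = p 2^{(p−2)/2} C^{p/2} and C₂ = p 2^{(p−2)/2} C (2μ/(p+1))^{(p−2)/p}. -/
/-!
With `M = 2μ/(p+1)` the bracket is `a + b` with `a = (α^{p+1} M)^{2/p}` and `b = C α^{2/p}`.
For `q = p/2 ≥ 1`, the tangent line of the convex function `t ↦ t^q` at `a + b` together with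
`(a + b)^{q-1} ≤ 2^{q-1} (a^{q-1} + b^{q-1})` gives
`(a + b)^q ≤ a^q + q 2^{q-1} (b^q + a^{q-1} b)`, and here `a^q = α^{p+1} M`, `b^q = C^{p/2} α`,
`a^{q-1} b = α^{p-1} C M^{(p-2)/p}`. Dividing by `α^p` gives the estimate, even with `p/2`
in place of `p` in `C₁` and `C₂`.
-/

open Real


lemma add_rpow_le_rpow_add_mul_rpow_sub_one {a b q : ℝ} (ha : 0 ≤ a) (hb : 0 ≤ b) (hq : 1 ≤ q) :
    (a + b) ^ q ≤ a ^ q + q * (a + b) ^ (q - 1) * b := by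
  rcases (add_nonneg ha hb).eq_or_lt with hab | hab
  · obtain ⟨rfl, rfl⟩ : a = 0 ∧ b = 0 := ⟨by linarith, by linarith⟩
    simp
  -- Bernoulli's inequality `1 + q s ≤ (1 + s) ^ q` at `1 + s = a / (a + b)`, rescaled by `(a + b) ^ q`.
  have bernoulli := one_add_mul_self_le_rpow_one_add (s := -(b / (a + b)))
    (by rw [neg_le_neg_iff, div_le_one hab]; linarith) hq
  rw [← sub_eq_add_neg, one_sub_div hab.ne', add_sub_cancel_right,
    div_rpow ha hab.le, le_div_iff₀ (rpow_pos_of_pos hab q)] at bernoulli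
  have hsplit : (a + b) ^ q = (a + b) ^ (q - 1) * (a + b) := by
    rw [← rpow_add_one hab.ne', sub_add_cancel]
  calc (a + b) ^ q = (1 + q * -(b / (a + b))) * (a + b) ^ q + q * (a + b) ^ (q - 1) * b := by
        rw [hsplit]; field_simp; ring
    _ ≤ a ^ q + q * (a + b) ^ (q - 1) * b := by gcongr

lemma rpow_add_le_two_rpow_mul_add_rpow {a b r : ℝ} (ha : 0 ≤ a) (hb : 0 ≤ b) (hr : 0 ≤ r) :
    (a + b) ^ r ≤ 2 ^ r * (a ^ r + b ^ r) := by
  wlog hba : b ≤ a generalizing a b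
  · rw [add_comm a, add_comm (a ^ r)]
    exact this hb ha (by linarith)
  calc (a + b) ^ r ≤ (2 * a) ^ r := by gcongr; linarith
    _ = 2 ^ r * a ^ r := mul_rpow zero_le_two ha
    _ ≤ 2 ^ r * (a ^ r + b ^ r) := by gcongr; exact le_add_of_nonneg_right (by positivity)

lemma add_rpow_le {a b q : ℝ} (ha : 0 ≤ a) (hb : 0 ≤ b) (hq : 1 ≤ q) :
    (a + b) ^ q ≤ a ^ q + q * 2 ^ (q - 1) * (b ^ q + a ^ (q - 1) * b) := by
  have hbq : b ^ (q - 1) * b = b ^ q := by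
    rw [← rpow_add_one' hb (by linarith), sub_add_cancel]
  calc (a + b) ^ q ≤ a ^ q + q * (a + b) ^ (q - 1) * b :=
        add_rpow_le_rpow_add_mul_rpow_sub_one ha hb hq
    _ ≤ a ^ q + q * (2 ^ (q - 1) * (a ^ (q - 1) + b ^ (q - 1))) * b := by
        gcongr; exact rpow_add_le_two_rpow_mul_add_rpow ha hb (by linarith)
    _ = a ^ q + q * 2 ^ (q - 1) * (b ^ q + a ^ (q - 1) * b) := by
        rw [← hbq]; ring

lemma scaled_add_rpow_half_le {p α M C : ℝ} (hp : 2 ≤ p) (hα : 0 < α) (hM : 0 ≤ M)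
    (hC : 0 ≤ C) :
    ((α ^ (p + 1) * M) ^ (2 / p) + C * α ^ (2 / p)) ^ (p / 2)
      ≤ α ^ (p + 1) * M + p / 2 * 2 ^ ((p - 2) / 2)
          * (C ^ (p / 2) * α + α ^ (p - 1) * (C * M ^ ((p - 2) / p))) := by
  have hp_inv : p / 2 = (2 / p)⁻¹ := (inv_div 2 p).symm
  have ha : ((α ^ (p + 1) * M) ^ (2 / p)) ^ (p / 2) = α ^ (p + 1) * M := by
    rw [hp_inv, rpow_rpow_inv (by positivity) (by positivity)]
  have hb : (C * α ^ (2 / p)) ^ (p / 2) = C ^ (p / 2) * α := by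
    rw [mul_rpow hC (by positivity), hp_inv, rpow_rpow_inv hα.le (by positivity)]
  have hab : ((α ^ (p + 1) * M) ^ (2 / p)) ^ (p / 2 - 1) * (C * α ^ (2 / p))
      = α ^ (p - 1) * (C * M ^ ((p - 2) / p)) := by
    have hexp : 2 / p * (p / 2 - 1) = (p - 2) / p := by field_simp
    have hαexp : α ^ ((p + 1) * ((p - 2) / p)) * α ^ (2 / p) = α ^ (p - 1) := by
      rw [← rpow_add hα]; congr 1; field_simp; ring
    rw [← rpow_mul (by positivity), hexp, mul_rpow (by positivity) hM, ← rpow_mul hα.le,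
      ← hαexp]
    ring
  have key := add_rpow_le (rpow_nonneg (by positivity : 0 ≤ α ^ (p + 1) * M) (2 / p))
    (by positivity : 0 ≤ C * α ^ (2 / p)) (by linarith : 1 ≤ p / 2)
  rwa [ha, hb, hab, show p / 2 - 1 = (p - 2) / 2 by ring] at key

/-- Estimate for the energy of the gluing region in the proof of the gap
phenomenon: for `p ≥ 2`, `α ≥ 1`, `μ, C ≥ 0`,
`(1/α^p)·((2α^{p+1}μ/(p+1))^{2/p} + Cα^{2/p})^{p/2} ≤ 2αμ/(p+1) + C₁/α^{p−1} + C₂/α`. -/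
theorem gluing_energy_estimate (p α μ C : ℝ) (hp : 2 ≤ p) (hα : 1 ≤ α)
    (hμ : 0 ≤ μ) (hC : 0 ≤ C) :
    (1 / α ^ p) * ((2 * α ^ (p + 1) * μ / (p + 1)) ^ (2 / p) + C * α ^ (2 / p)) ^ (p / 2)
      ≤ 2 * α * μ / (p + 1)
        + (p * 2 ^ ((p - 2) / 2) * C ^ (p / 2)) / α ^ (p - 1)
        + (p * 2 ^ ((p - 2) / 2) * C * (2 * μ / (p + 1)) ^ ((p - 2) / p)) / α := by
  have hα0 : 0 < α := by linarith
  set M := 2 * μ / (p + 1)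
  have hM : 0 ≤ M := by positivity
  have hαp : α ^ p = α ^ (p - 1) * α := by rw [← rpow_add_one hα0.ne', sub_add_cancel]
  have hαp1 : α ^ (p + 1) = α ^ (p - 1) * α * α := by rw [rpow_add_one hα0.ne', hαp]
  calc (1 / α ^ p) * ((2 * α ^ (p + 1) * μ / (p + 1)) ^ (2 / p) + C * α ^ (2 / p)) ^ (p / 2)
      = (1 / α ^ p) * ((α ^ (p + 1) * M) ^ (2 / p) + C * α ^ (2 / p)) ^ (p / 2) := by
        rw [show 2 * α ^ (p + 1) * μ / (p + 1) = α ^ (p + 1) * M by simp only [M]; ring]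
    _ ≤ (1 / α ^ p) * (α ^ (p + 1) * M + p / 2 * 2 ^ ((p - 2) / 2)
          * (C ^ (p / 2) * α + α ^ (p - 1) * (C * M ^ ((p - 2) / p)))) := by
        gcongr; exact scaled_add_rpow_half_le hp hα0 hM hC
    _ = α * M + (p / 2 * 2 ^ ((p - 2) / 2) * C ^ (p / 2)) / α ^ (p - 1)
          + (p / 2 * 2 ^ ((p - 2) / 2) * C * M ^ ((p - 2) / p)) / α := by
        rw [hαp, hαp1]; field_simp; ring
    _ ≤ _ := by
        rw [show α * M = 2 * α * μ / (p + 1) by simp only [M]; ring]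
        gcongr <;> linarith
end
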